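/- Nondomination commutes with unions of nondominated sets: Let I be a finite index set and let S_i ⊆ ℝ^K be a finite set for each i ∈ I. Then ND(⋃_{i ∈ I} ND(S_i)) = ND(⋃_{i ∈ I} S_i). -/

import Mathlib

open Pointwise

/-- `y` dominates `y'`: componentwise at least as large and not equal. -/
def dominates {K : ℕ} (y y' : Fin K → ℝ) : Prop :=
  (∀ k, y' k ≤ y k) ∧ y ≠ y'

/-- The nondominated subset of `S`. -/
def ND {K : ℕ} (S : Set (Fin K → ℝ)) : Set (Fin K → ℝ) :=
  {y ∈ S | ¬ ∃ y' ∈ S, dominates y' y}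

/-!
Nondominated points are the maximal elements for the componentwise order. A point maximal in
`⋃ i, S i` is maximal in its own `S i`, and stays maximal in the smaller set `⋃ i, ND (S i)`.
Conversely, if `y` is maximal in `⋃ i, ND (S i)` and `y ≤ w ∈ S j`, then, `S j` being finite,
`w` lies below some maximal `z` of `S j`; maximality of `y` forces `z ≤ y`, hence `w ≤ y`.
-/

section Maximal

variable {α ι : Type*} [PartialOrder α] {S : ι → Set α}

theorem maximal_iUnion_of_maximal_iUnion_maximal
    (hS : ∀ i, ∀ a ∈ S i, ∃ b, a ≤ b ∧ Maximal (· ∈ S i) b) {x : α}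
    (hx : Maximal (· ∈ ⋃ i, {y | Maximal (· ∈ S i) y}) x) :
    Maximal (· ∈ ⋃ i, S i) x := by
  obtain ⟨i, hxi⟩ := Set.mem_iUnion.1 hx.prop
  refine ⟨Set.mem_iUnion.2 ⟨i, hxi.prop⟩, fun w hw hxw => ?_⟩
  obtain ⟨j, hwj⟩ := Set.mem_iUnion.1 hw
  obtain ⟨z, hwz, hz⟩ := hS j w hwj
  exact hwz.trans (hx.2 (Set.mem_iUnion.2 ⟨j, hz⟩) (hxw.trans hwz))

theorem maximal_iUnion_maximal_of_maximal_iUnion {x : α}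
    (hx : Maximal (· ∈ ⋃ i, S i) x) :
    Maximal (· ∈ ⋃ i, {y | Maximal (· ∈ S i) y}) x := by
  have hsub : (⋃ i, {y | Maximal (· ∈ S i) y}) ⊆ ⋃ i, S i :=
    Set.iUnion_mono fun i _ hy => hy.prop
  obtain ⟨i, hxi⟩ := Set.mem_iUnion.1 hx.prop
  exact hx.mono hsub (Set.mem_iUnion.2 ⟨i, hx.mono (Set.subset_iUnion S i) hxi⟩)

end Maximal

theorem dominates_iff_lt {K : ℕ} {y y' : Fin K → ℝ} : dominates y y' ↔ y' < y := by
  rw [lt_iff_le_and_ne, ne_comm]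
  rfl

theorem ND_eq_setOf_maximal {K : ℕ} (S : Set (Fin K → ℝ)) :
    ND S = {y | Maximal (· ∈ S) y} := by
  ext y
  simp [ND, maximal_iff_forall_gt, dominates_iff_lt, imp_not_comm]

theorem ND_iUnion_ND_general {K : ℕ} {ι : Type*} (S : ι → Set (Fin K → ℝ))
    (hS : ∀ i, (S i).Finite) :
    ND (⋃ i, ND (S i)) = ND (⋃ i, S i) := by
  simp only [ND_eq_setOf_maximal]
  ext x
  exact ⟨maximal_iUnion_of_maximal_iUnion_maximal fun i _ ha => (hS i).exists_le_maximal ha,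
    maximal_iUnion_maximal_of_maximal_iUnion⟩

/-- **Nondomination commutes with unions of nondominated sets.**  For a finite index set
`ι` and finite sets `S i ⊆ ℝ^K`, `ND(⋃ i, ND(S i)) = ND(⋃ i, S i)`. -/
theorem ND_iUnion_ND {K : ℕ} {ι : Type*} [Finite ι] (S : ι → Set (Fin K → ℝ))
    (hS : ∀ i, (S i).Finite) :
    ND (⋃ i, ND (S i)) = ND (⋃ i, S i) :=
  ND_iUnion_ND_general S hS
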